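/- Assume ‖Δ_i H_ν‖_{L²_μ} ≤ (1 + Kν)^θ for all i, ν ∈ ℕ₀ with constants K ≥ 1, θ ≥ 0 (univariate case). Then for every finitely supported multi-index ν, c_ν := sup over finite Λ of ‖(I − U_Λ)H_ν‖_{L²_μ} satisfies c_ν ≤ ∏_{m∈ℕ} (1 + K ν_m)^{θ+1}. -/

import Mathlib

open scoped BigOperators
open MeasureTheory ProbabilityTheory

/-- Univariate orthonormal Hermite polynomial of degree `n` (as a function),
w.r.t. the standard Gaussian measure: `H_n(t) = He_n(t)/√(n!)`. -/
noncomputable def hermiteFun (n : ℕ) (t : ℝ) : ℝ :=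
  Polynomial.aeval t (Polynomial.hermite n) / Real.sqrt (Nat.factorial n)

/-- Tensorized Hermite polynomial `H_ν = ∏_m H_{ν_m}` for a finitely supported
multi-index `ν`. -/
noncomputable def hermiteProd (ν : ℕ →₀ ℕ) (ξ : ℕ → ℝ) : ℝ :=
  ∏ m ∈ ν.support, hermiteFun (ν m) (ξ m)

/-- Tensor-product Lagrange interpolation operator `U_k = ⊗_m U_{k_m}` based on
univariate nodes `x k 0, …, x k k` at level `k`, applied to `f` and evaluated at `ξ`. -/
noncomputable def tensorU (x : ℕ → ℕ → ℝ) {E : Type*} [AddCommGroup E] [Module ℝ E]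
    (k : ℕ →₀ ℕ) (f : (ℕ → ℝ) → E) (ξ : ℕ → ℝ) : E :=
  ∑ j ∈ Finset.Iic k,
    (∏ m ∈ k.support,
      (Lagrange.basis (Finset.range (k m + 1)) (x (k m)) (j m)).eval (ξ m)) •
      f (fun m => x (k m) (j m))

/-- Tensorized detail operator `Δ_i = ⊗_m (U_{i_m} − U_{i_m−1})` (with `U_{−1}=0`),
expanded as a signed sum of tensor-product interpolation operators. -/
noncomputable def tensorDeltaF (x : ℕ → ℕ → ℝ) {E : Type*} [AddCommGroup E] [Module ℝ E]
    (i : ℕ →₀ ℕ) (f : (ℕ → ℝ) → E) (ξ : ℕ → ℝ) : E :=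
  ∑ k ∈ Finset.Iic i,
    if ∀ m ∈ i.support, i m - 1 ≤ k m then
      ((-1 : ℝ) ^ (∑ m ∈ i.support, (i m - k m))) • tensorU x k f ξ
    else 0

/-- The `L²_μ` norm of a scalar function. -/
noncomputable def l2norm (μ : Measure (ℕ → ℝ)) (g : (ℕ → ℝ) → ℝ) : ℝ :=
  Real.sqrt (∫ ξ, (g ξ) ^ 2 ∂μ)

/-- Univariate Lagrange interpolation operator at nodes `x k 0, …, x k k`. -/
noncomputable def uniU (x : ℕ → ℕ → ℝ) (k : ℕ) (f : ℝ → ℝ) (t : ℝ) : ℝ :=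
  ∑ j ∈ Finset.range (k + 1),
    (Lagrange.basis (Finset.range (k + 1)) (x k) j).eval t * f (x k j)

/-- Univariate detail operator `Δ_k = U_k − U_{k−1}` (with `U_{−1} = 0`). -/
noncomputable def uniDelta (x : ℕ → ℕ → ℝ) : ℕ → (ℝ → ℝ) → ℝ → ℝ
  | 0 => uniU x 0
  | (k + 1) => fun f t => uniU x (k + 1) f t - uniU x k f t


/-!
Interpolation at `k + 1` distinct nodes reproduces polynomials of degree `≤ k`, so
`Δ_k H_n = 0` for `k > n` and `∑_{k ≤ n} Δ_k H_n = U_n H_n = H_n`. Applied to the product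
function `H_ν`, the tensorized operator `Δ_i` acts factorwise, hence `Δ_i H_ν` vanishes unless
`i ≤ ν` and `(I − U_Λ) H_ν = ∑_{i ≤ ν, i ∉ Λ} ∏_m Δ_{i_m} H_{ν_m}`. Under the product Gaussian
measure the `L²` norm of such a product is the product of the univariate norms, each at most
`(1 + K ν_m)^θ`. By the triangle inequality the error is bounded by
`#{i ≤ ν} · ∏_m (1 + K ν_m)^θ = ∏_m (1 + ν_m) (1 + K ν_m)^θ ≤ ∏_m (1 + K ν_m)^(θ+1)`.
-/

open Finset Polynomial
open scoped ENNReal NNReal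

lemma Finset.sum_finsupp_prod_eq_prod_sum {ι α R : Type*} [Zero α] [CommSemiring R]
    (s : Finset ι) (t : ι → Finset α) (g : ι → α → R) :
    ∑ f ∈ s.finsupp t, ∏ i ∈ s, g i (f i) = ∏ i ∈ s, ∑ a ∈ t i, g i a := by
  classical
  rw [prod_sum, Finset.finsupp, sum_map]
  refine sum_congr rfl fun p _ => ?_
  rw [← prod_attach s]
  refine prod_congr rfl fun i _ => ?_
  simp [Finsupp.indicator_of_mem i.2]

lemma Finsupp.Iic_eq_finsupp {ι : Type*} [DecidableEq ι] (k : ι →₀ ℕ) {S : Finset ι}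
    (hk : k.support ⊆ S) : Iic k = S.finsupp fun m => Iic (k m) := by
  ext f
  simp only [mem_Iic, mem_finsupp_iff, Finsupp.le_def]
  refine ⟨fun hf => ⟨fun m hm => hk ?_, fun m _ => hf m⟩, fun ⟨hfS, hf⟩ m => ?_⟩
  · simp only [Finsupp.mem_support_iff] at hm ⊢; have := hf m; omega
  · by_cases hm : m ∈ S
    · exact hf m hm
    · simp [Finsupp.notMem_support_iff.mp fun h => hm (hfS h)]

lemma Finsupp.filter_Iic_eq_finsupp {ι : Type*} [DecidableEq ι] (i : ι →₀ ℕ) {S : Finset ι}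
    (hi : i.support ⊆ S) :
    {k ∈ Iic i | ∀ m ∈ i.support, i m - 1 ≤ k m} = S.finsupp fun m => Icc (i m - 1) (i m) := by
  ext k
  rw [mem_filter, Finsupp.Iic_eq_finsupp i hi, mem_finsupp_iff, mem_finsupp_iff]
  simp only [mem_Iic, mem_Icc, Finsupp.mem_support_iff]
  refine ⟨fun ⟨⟨hkS, hk⟩, hlow⟩ => ⟨hkS, fun m hm => ⟨?_, hk m hm⟩⟩,
    fun ⟨hkS, hk⟩ => ⟨⟨hkS, fun m hm => (hk m hm).2⟩, fun m hm => (hk m (hi ?_)).1⟩⟩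
  · by_cases h0 : i m = 0
    · omega
    · exact hlow m h0
  · simpa using hm

lemma uniU_eq_eval_interpolate (x : ℕ → ℕ → ℝ) (k : ℕ) (f : ℝ → ℝ) (t : ℝ) :
    uniU x k f t = (Lagrange.interpolate (range (k + 1)) (x k) fun j => f (x k j)).eval t := by
  simp [uniU, Lagrange.interpolate_apply, eval_finsetSum, mul_comm]

lemma uniU_eval_of_natDegree_le (x : ℕ → ℕ → ℝ) {k : ℕ} (hx : Set.InjOn (x k) (Set.Iic k))
    {p : ℝ[X]} (hp : p.natDegree ≤ k) (t : ℝ) :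
    uniU x k (fun s => p.eval s) t = p.eval t := by
  have hinj : Set.InjOn (x k) (range (k + 1)) := by
    simpa [Set.Iio_add_one_eq_Iic] using hx
  have hdeg : p.degree < #(range (k + 1)) := by
    rw [card_range]
    exact degree_le_natDegree.trans_lt (by exact_mod_cast Nat.lt_succ_of_le hp)
  rw [uniU_eq_eval_interpolate, ← Lagrange.eq_interpolate hinj hdeg]

lemma sum_range_uniDelta (x : ℕ → ℕ → ℝ) (f : ℝ → ℝ) (t : ℝ) (n : ℕ) :
    ∑ k ∈ range (n + 1), uniDelta x k f t = uniU x n f t := by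
  induction n with
  | zero => simp [uniDelta]
  | succ n ih => rw [sum_range_succ, ih, uniDelta]; ring

lemma uniDelta_eq_zero_of_natDegree_lt {x : ℕ → ℕ → ℝ} (hx : ∀ k, Set.InjOn (x k) (Set.Iic k))
    {p : ℝ[X]} {k : ℕ} (hk : p.natDegree < k) (t : ℝ) :
    uniDelta x k (fun s => p.eval s) t = 0 := by
  obtain ⟨k, rfl⟩ := Nat.exists_eq_add_one_of_ne_zero (Nat.ne_zero_of_lt hk)
  dsimp only [uniDelta]
  rw [uniU_eval_of_natDegree_le x (hx _) hk.le,
    uniU_eval_of_natDegree_le x (hx _) (Nat.lt_add_one_iff.mp hk), sub_self]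

/-- At `n = 0` the truncated `n - 1` leaves the single term `U_0`, matching `U_{-1} = 0`. -/
lemma uniDelta_eq_sum_Icc (x : ℕ → ℕ → ℝ) (f : ℝ → ℝ) (t : ℝ) (n : ℕ) :
    uniDelta x n f t = ∑ k ∈ Icc (n - 1) n, (-1 : ℝ) ^ (n - k) * uniU x k f t := by
  cases n with
  | zero => simp [uniDelta]
  | succ n =>
    rw [add_tsub_cancel_right, sum_Icc_succ_top (Nat.le_succ n), Icc_self, sum_singleton]
    simp only [uniDelta, add_tsub_cancel_left, pow_one, neg_mul, one_mul, tsub_self, pow_zero]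
    ring

lemma uniDelta_exists_polynomial (x : ℕ → ℕ → ℝ) (k : ℕ) (f : ℝ → ℝ) :
    ∃ p : ℝ[X], uniDelta x k f = fun t => p.eval t := by
  cases k with
  | zero => exact ⟨_, funext (uniU_eq_eval_interpolate x 0 f)⟩
  | succ k =>
    refine ⟨Lagrange.interpolate (range (k + 2)) (x (k + 1)) (fun j => f (x (k + 1) j)) -
      Lagrange.interpolate (range (k + 1)) (x k) (fun j => f (x k j)), funext fun t => ?_⟩
    dsimp only [uniDelta]
    rw [eval_sub, uniU_eq_eval_interpolate, uniU_eq_eval_interpolate]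

noncomputable def hermitePoly (n : ℕ) : ℝ[X] :=
  (Real.sqrt n.factorial)⁻¹ • (hermite n).map (Int.castRingHom ℝ)

lemma hermiteFun_eq_eval (n : ℕ) : hermiteFun n = fun t => (hermitePoly n).eval t := by
  funext t
  simp [hermiteFun, hermitePoly, div_eq_inv_mul, aeval_def, eval₂_eq_eval_map]

lemma natDegree_hermitePoly_le (n : ℕ) : (hermitePoly n).natDegree ≤ n :=
  (natDegree_smul_le _ _).trans <| natDegree_map_le.trans natDegree_hermite.le

lemma hermiteFun_zero : hermiteFun 0 = fun _ => 1 := by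
  funext t; simp [hermiteFun]

lemma uniU_hermiteFun_of_le {x : ℕ → ℕ → ℝ} (hx : ∀ k, Set.InjOn (x k) (Set.Iic k)) {n k : ℕ}
    (h : n ≤ k) : uniU x k (hermiteFun n) = hermiteFun n := by
  funext t
  rw [hermiteFun_eq_eval, uniU_eval_of_natDegree_le x (hx k) ((natDegree_hermitePoly_le n).trans h)]

lemma uniDelta_hermiteFun_of_lt {x : ℕ → ℕ → ℝ} (hx : ∀ k, Set.InjOn (x k) (Set.Iic k))
    {n k : ℕ} (h : n < k) (t : ℝ) : uniDelta x k (hermiteFun n) t = 0 := by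
  rw [hermiteFun_eq_eval]
  exact uniDelta_eq_zero_of_natDegree_lt hx ((natDegree_hermitePoly_le n).trans_lt h) t

lemma tensorU_prod (x : ℕ → ℕ → ℝ) (f : ℕ → ℝ → ℝ) {k : ℕ →₀ ℕ} {S : Finset ℕ}
    (hk : k.support ⊆ S) (ξ : ℕ → ℝ) :
    tensorU x k (fun ξ => ∏ m ∈ S, f m (ξ m)) ξ = ∏ m ∈ S, uniU x (k m) (f m) (ξ m) := by
  have hterm : ∀ j ∈ S.finsupp fun m => Iic (k m),
      (∏ m ∈ k.support, (Lagrange.basis (range (k m + 1)) (x (k m)) (j m)).eval (ξ m)) •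
        ∏ m ∈ S, f m (x (k m) (j m))
      = ∏ m ∈ S, (Lagrange.basis (range (k m + 1)) (x (k m)) (j m)).eval (ξ m) *
          f m (x (k m) (j m)) := by
    intro j hj
    rw [smul_eq_mul, prod_mul_distrib]
    congr 1
    -- a coordinate at level `0` has the single node `x 0 0`, whose Lagrange basis polynomial is `1`
    refine prod_subset hk fun m hmS hmk => ?_
    have hk0 : k m = 0 := Finsupp.notMem_support_iff.mp hmk
    have hj0 : j m = 0 := by simpa [hk0] using (mem_finsupp_iff.mp hj).2 m hmS
    simp [hk0, hj0, Lagrange.basis_singleton]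
  rw [tensorU, Finsupp.Iic_eq_finsupp k hk, sum_congr rfl hterm, sum_finsupp_prod_eq_prod_sum S _
    fun m a => (Lagrange.basis (range (k m + 1)) (x (k m)) a).eval (ξ m) * f m (x (k m) a)]
  simp_rw [uniU, Nat.range_succ_eq_Iic]

lemma tensorDeltaF_prod (x : ℕ → ℕ → ℝ) (f : ℕ → ℝ → ℝ) {i : ℕ →₀ ℕ} {S : Finset ℕ}
    (hi : i.support ⊆ S) (ξ : ℕ → ℝ) :
    tensorDeltaF x i (fun ξ => ∏ m ∈ S, f m (ξ m)) ξ
      = ∏ m ∈ S, uniDelta x (i m) (f m) (ξ m) := by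
  have hterm : ∀ k ∈ S.finsupp fun m => Icc (i m - 1) (i m),
      (-1 : ℝ) ^ (∑ m ∈ i.support, (i m - k m)) • tensorU x k (fun ξ => ∏ m ∈ S, f m (ξ m)) ξ
      = ∏ m ∈ S, (-1 : ℝ) ^ (i m - k m) * uniU x (k m) (f m) (ξ m) := by
    intro k hk
    rw [mem_finsupp_iff] at hk
    rw [smul_eq_mul, tensorU_prod x f hk.1, prod_mul_distrib, ← prod_pow_eq_pow_sum]
    congr 1
    refine prod_subset hi fun m hmS hmi => ?_
    have hi0 : i m = 0 := Finsupp.notMem_support_iff.mp hmi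
    simp [hi0]
  rw [tensorDeltaF, ← sum_filter, Finsupp.filter_Iic_eq_finsupp i hi, sum_congr rfl hterm,
    sum_finsupp_prod_eq_prod_sum S _ fun m a => (-1 : ℝ) ^ (i m - a) * uniU x a (f m) (ξ m)]
  simp_rw [uniDelta_eq_sum_Icc]

lemma tensorDeltaF_hermiteProd_of_not_le {x : ℕ → ℕ → ℝ} (hx : ∀ k, Set.InjOn (x k) (Set.Iic k))
    {i ν : ℕ →₀ ℕ} (h : ¬i ≤ ν) (ξ : ℕ → ℝ) : tensorDeltaF x i (hermiteProd ν) ξ = 0 := by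
  have hν : hermiteProd ν = fun ξ => ∏ m ∈ i.support ∪ ν.support, hermiteFun (ν m) (ξ m) := by
    funext ξ
    refine prod_subset subset_union_right fun m _ hm => ?_
    rw [Finsupp.notMem_support_iff.mp hm, hermiteFun_zero]
  obtain ⟨m, hm⟩ : ∃ m, ν m < i m := by simpa [Finsupp.le_def] using h
  rw [hν, tensorDeltaF_prod x _ subset_union_left]
  refine prod_eq_zero (mem_union_left _ ?_) (uniDelta_hermiteFun_of_lt hx hm _)
  exact Finsupp.mem_support_iff.mpr (by omega)

lemma hermiteProd_eq_sum_Iic {x : ℕ → ℕ → ℝ} (hx : ∀ k, Set.InjOn (x k) (Set.Iic k))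
    (ν : ℕ →₀ ℕ) (ξ : ℕ → ℝ) :
    hermiteProd ν ξ =
      ∑ i ∈ Iic ν, ∏ m ∈ ν.support, uniDelta x (i m) (hermiteFun (ν m)) (ξ m) := by
  rw [Finsupp.Iic_eq_finsupp ν subset_rfl, sum_finsupp_prod_eq_prod_sum _ _
    fun m a => uniDelta x a (hermiteFun (ν m)) (ξ m)]
  refine prod_congr rfl fun m _ => ?_
  rw [← Nat.range_succ_eq_Iic, sum_range_uniDelta, uniU_hermiteFun_of_le hx le_rfl]

lemma hermiteProd_sub_sum_tensorDeltaF {x : ℕ → ℕ → ℝ} (hx : ∀ k, Set.InjOn (x k) (Set.Iic k))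
    (ν : ℕ →₀ ℕ) (Λ : Finset (ℕ →₀ ℕ)) (ξ : ℕ → ℝ) :
    hermiteProd ν ξ - ∑ i ∈ Λ, tensorDeltaF x i (hermiteProd ν) ξ =
      ∑ i ∈ Iic ν \ Λ, ∏ m ∈ ν.support, uniDelta x (i m) (hermiteFun (ν m)) (ξ m) := by
  set d : (ℕ →₀ ℕ) → ℝ := fun i => ∏ m ∈ ν.support, uniDelta x (i m) (hermiteFun (ν m)) (ξ m)
  have hΛ : ∑ i ∈ Λ, tensorDeltaF x i (hermiteProd ν) ξ = ∑ i ∈ Iic ν ∩ Λ, d i := by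
    rw [inter_comm, ← sum_ite_mem]
    refine sum_congr rfl fun i _ => ?_
    by_cases h : i ≤ ν
    · rw [if_pos (mem_Iic.mpr h)]
      exact tensorDeltaF_prod x _ (Finsupp.support_mono h) ξ
    · rw [if_neg (mt mem_Iic.mp h), tensorDeltaF_hermiteProd_of_not_le hx h]
  rw [hΛ, hermiteProd_eq_sum_Iic hx, ← sum_sdiff_eq_sub inter_subset_left, sdiff_inter_self_left]

lemma integrable_eval_gaussianReal (p : ℝ[X]) (m : ℝ) (v : ℝ≥0) :
    Integrable (fun t => p.eval t) (gaussianReal m v) := by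
  induction p using Polynomial.induction_on' with
  | add p q hp hq => simp only [eval_add]; exact hp.add hq
  | monomial n a =>
    have hpow : Integrable (fun t : ℝ => t ^ n) (gaussianReal m v) :=
      (integrable_norm_iff (by fun_prop)).mp <| by
        simpa [norm_pow] using (memLp_id_gaussianReal (μ := m) (v := v) n).integrable_norm_pow'
    simpa using hpow.const_mul a

lemma measurable_uniDelta (x : ℕ → ℕ → ℝ) (k : ℕ) (f : ℝ → ℝ) : Measurable (uniDelta x k f) := by
  obtain ⟨p, hp⟩ := uniDelta_exists_polynomial x k f
  rw [hp]
  exact p.continuous.measurable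

lemma integrable_uniDelta_sq_gaussianReal (x : ℕ → ℕ → ℝ) (k : ℕ) (f : ℝ → ℝ) (m : ℝ)
    (v : ℝ≥0) : Integrable (fun t => uniDelta x k f t ^ 2) (gaussianReal m v) := by
  obtain ⟨p, hp⟩ := uniDelta_exists_polynomial x k f
  rw [hp]
  exact (integrable_eval_gaussianReal (p ^ 2) m v).congr (.of_forall fun t => eval_pow 2)

lemma l2norm_eq_toReal_eLpNorm {μ : Measure (ℕ → ℝ)} {f : (ℕ → ℝ) → ℝ} (hf : MemLp f 2 μ) :
    l2norm μ f = (eLpNorm f 2 μ).toReal := by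
  rw [hf.eLpNorm_eq_integral_rpow_norm two_ne_zero ENNReal.ofNat_ne_top,
    ENNReal.toReal_ofReal (by positivity), l2norm, Real.sqrt_eq_rpow]
  norm_num

lemma l2norm_sum_le {μ : Measure (ℕ → ℝ)} {ι : Type*} (T : Finset ι) {f : ι → (ℕ → ℝ) → ℝ}
    (hf : ∀ i ∈ T, MemLp (f i) 2 μ) :
    l2norm μ (fun ξ => ∑ i ∈ T, f i ξ) ≤ ∑ i ∈ T, l2norm μ (f i) := by
  have hsum : (fun ξ => ∑ i ∈ T, f i ξ) = ∑ i ∈ T, f i := by ext; simp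
  rw [hsum, l2norm_eq_toReal_eLpNorm (memLp_finsetSum' T hf)]
  calc (eLpNorm (∑ i ∈ T, f i) 2 μ).toReal
      ≤ (∑ i ∈ T, eLpNorm (f i) 2 μ).toReal :=
        ENNReal.toReal_mono (ENNReal.sum_ne_top.mpr fun i hi => (hf i hi).eLpNorm_ne_top)
          (eLpNorm_sum_le (fun i hi => (hf i hi).aestronglyMeasurable) one_le_two)
    _ = ∑ i ∈ T, l2norm μ (f i) := by
        rw [ENNReal.toReal_sum fun i hi => (hf i hi).eLpNorm_ne_top]
        exact sum_congr rfl fun i hi => (l2norm_eq_toReal_eLpNorm (hf i hi)).symm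

lemma prod_eq_prod_fin_mulIndicator {M : Type*} [CommMonoid M] {S : Finset ℕ} {n : ℕ}
    (hS : S ⊆ range n) (f : ℕ → M) :
    ∏ m ∈ S, f m = ∏ j : Fin n, (S : Set ℕ).mulIndicator f j := by
  rw [Fin.prod_univ_eq_prod_range (fun m => (S : Set ℕ).mulIndicator f m),
    prod_mulIndicator_subset f hS]

lemma prod_eq_prod_fin_mulIndicator_apply {S : Finset ℕ} {n : ℕ} (hS : S ⊆ range n)
    (h : ℕ → ℝ → ℝ) (ξ : ℕ → ℝ) :
    ∏ m ∈ S, h m (ξ m) = ∏ j : Fin n, (S : Set ℕ).mulIndicator h j (ξ j) := by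
  simp only [prod_eq_prod_fin_mulIndicator hS fun m => h m (ξ m), Set.mulIndicator_apply]
  exact prod_congr rfl fun j _ => by split_ifs <;> rfl

lemma measurable_mulIndicator_apply {h : ℕ → ℝ → ℝ} (hh : ∀ m, Measurable (h m)) (S : Set ℕ)
    (m : ℕ) : Measurable (S.mulIndicator h m) := by
  by_cases hm : m ∈ S
  · simpa [hm] using hh m
  · simpa [hm] using measurable_one

def HasIIDCoordinates (μ : Measure (ℕ → ℝ)) (ρ : Measure ℝ) : Prop :=
  ∀ n : ℕ, μ.map (fun ξ (j : Fin n) => ξ j) = Measure.pi fun _ : Fin n => ρ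

namespace HasIIDCoordinates

variable {μ : Measure (ℕ → ℝ)} {ρ : Measure ℝ}

lemma measurePreserving (hμ : HasIIDCoordinates μ ρ) (n : ℕ) :
    MeasurePreserving (fun ξ (j : Fin n) => ξ j) μ (Measure.pi fun _ => ρ) :=
  ⟨measurable_pi_lambda _ fun _ => measurable_pi_apply _, hμ n⟩

lemma integrable_prod [IsFiniteMeasure ρ] (hμ : HasIIDCoordinates μ ρ) {h : ℕ → ℝ → ℝ}
    (hi : ∀ m, Integrable (h m) ρ) (S : Finset ℕ) :
    Integrable (fun ξ => ∏ m ∈ S, h m (ξ m)) μ := by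
  obtain ⟨n, hS⟩ := S.exists_nat_subset_range
  simp_rw [prod_eq_prod_fin_mulIndicator_apply hS h]
  refine (hμ.measurePreserving n).integrable_comp_of_integrable
    (g := fun y : Fin n → ℝ => ∏ j : Fin n, (S : Set ℕ).mulIndicator h j (y j)) ?_
  refine Integrable.fintype_prod fun j => ?_
  by_cases hj : (j : ℕ) ∈ (S : Set ℕ) <;> simp [hj, hi, Pi.one_def]

variable [IsProbabilityMeasure ρ]

lemma integral_prod (hμ : HasIIDCoordinates μ ρ) {h : ℕ → ℝ → ℝ}
    (hh : ∀ m, Measurable (h m)) (S : Finset ℕ) :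
    ∫ ξ, ∏ m ∈ S, h m (ξ m) ∂μ = ∏ m ∈ S, ∫ t, h m t ∂ρ := by
  obtain ⟨n, hS⟩ := S.exists_nat_subset_range
  have hint : ∀ j, ∫ t, (S : Set ℕ).mulIndicator h j t ∂ρ
      = (S : Set ℕ).mulIndicator (fun m => ∫ t, h m t ∂ρ) j := by
    intro j
    by_cases hj : j ∈ (S : Set ℕ) <;> simp [hj]
  simp_rw [prod_eq_prod_fin_mulIndicator_apply hS h, prod_eq_prod_fin_mulIndicator hS, ← hint]
  rw [← integral_fintype_prod_eq_prod, ← (hμ.measurePreserving n).map_eq,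
    integral_map (hμ.measurePreserving n).aemeasurable]
  exact (Finset.measurable_prod (f := fun (j : Fin n) (y : Fin n → ℝ) =>
    (S : Set ℕ).mulIndicator h j (y j)) univ fun j _ =>
    (measurable_mulIndicator_apply hh _ j).comp (measurable_pi_apply j)).aestronglyMeasurable

lemma memLp_prod (hμ : HasIIDCoordinates μ ρ) {g : ℕ → ℝ → ℝ}
    (hg : ∀ m, Measurable (g m)) (hg2 : ∀ m, Integrable (fun t => g m t ^ 2) ρ) (S : Finset ℕ) :
    MemLp (fun ξ => ∏ m ∈ S, g m (ξ m)) 2 μ := by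
  have hmeas : Measurable fun ξ : ℕ → ℝ => ∏ m ∈ S, g m (ξ m) :=
    Finset.measurable_prod S fun m _ => (hg m).comp (measurable_pi_apply m)
  refine (memLp_two_iff_integrable_sq hmeas.aestronglyMeasurable).mpr ?_
  simpa only [← prod_pow] using hμ.integrable_prod (h := fun m t => g m t ^ 2) hg2 S

lemma l2norm_prod (hμ : HasIIDCoordinates μ ρ) {g : ℕ → ℝ → ℝ}
    (hg : ∀ m, Measurable (g m)) (S : Finset ℕ) :
    l2norm μ (fun ξ => ∏ m ∈ S, g m (ξ m)) = ∏ m ∈ S, Real.sqrt (∫ t, g m t ^ 2 ∂ρ) := by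
  simp_rw [l2norm, ← prod_pow]
  rw [hμ.integral_prod (h := fun m t => g m t ^ 2) fun m => (hg m).pow_const 2,
    Real.sqrt_prod _ fun m _ => integral_nonneg fun t => sq_nonneg _]

end HasIIDCoordinates

lemma natCast_add_one_mul_rpow_le {K : ℝ} (hK : 1 ≤ K) (n : ℕ) (θ : ℝ) :
    ((n : ℝ) + 1) * (1 + K * n) ^ θ ≤ (1 + K * n) ^ (θ + 1) := by
  have hn : (n : ℝ) + 1 ≤ 1 + K * n := by nlinarith [(n.cast_nonneg : (0 : ℝ) ≤ n)]
  rw [Real.rpow_add_one (by positivity), mul_comm]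
  gcongr

lemma card_Iic_mul_prod_rpow_le {ι : Type*} [DecidableEq ι] {K : ℝ} (hK : 1 ≤ K) (θ : ℝ)
    (ν : ι →₀ ℕ) :
    (#(Iic ν) : ℝ) * ∏ m ∈ ν.support, (1 + K * ν m) ^ θ ≤
      ∏ m ∈ ν.support, (1 + K * ν m) ^ (θ + 1) := by
  rw [Finsupp.card_Iic, Nat.cast_prod, ← prod_mul_distrib]
  refine prod_le_prod (fun m _ => by positivity) fun m _ => ?_
  simpa using natCast_add_one_mul_rpow_le hK (ν m) θ

theorem c_nu_le_prod_bound_general (x : ℕ → ℕ → ℝ)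
    (hx : ∀ k : ℕ, Set.InjOn (x k) (Set.Iic k))
    (μ : Measure (ℕ → ℝ))
    (hμ : ∀ n : ℕ, μ.map (fun ξ (j : Fin n) => ξ (j : ℕ)) =
      Measure.pi fun _ : Fin n => gaussianReal 0 1)
    (K θ : ℝ) (hK : 1 ≤ K)
    (hbound : ∀ i n : ℕ,
      Real.sqrt (∫ t, (uniDelta x i (hermiteFun n) t) ^ 2 ∂(gaussianReal 0 1)) ≤
        (1 + K * (n : ℝ)) ^ θ)
    (ν : ℕ →₀ ℕ) :
    sSup {e : ℝ | ∃ Λ : Finset (ℕ →₀ ℕ),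
        e = l2norm μ (fun ξ =>
          hermiteProd ν ξ - ∑ i ∈ Λ, tensorDeltaF x i (hermiteProd ν) ξ)} ≤
      ∏ m ∈ ν.support, (1 + K * (ν m : ℝ)) ^ (θ + 1) := by
  have hμ' : HasIIDCoordinates μ (gaussianReal 0 1) := hμ
  have hK0 : 0 ≤ K := by linarith
  set C := ∏ m ∈ ν.support, (1 + K * (ν m : ℝ)) ^ θ
  refine Real.sSup_le ?_ (prod_nonneg fun m _ => by positivity)
  rintro _ ⟨Λ, rfl⟩
  calc l2norm μ (fun ξ => hermiteProd ν ξ - ∑ i ∈ Λ, tensorDeltaF x i (hermiteProd ν) ξ)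
      = l2norm μ (fun ξ => ∑ i ∈ Iic ν \ Λ,
          ∏ m ∈ ν.support, uniDelta x (i m) (hermiteFun (ν m)) (ξ m)) := by
        simp_rw [hermiteProd_sub_sum_tensorDeltaF hx]
    _ ≤ ∑ i ∈ Iic ν \ Λ, ∏ m ∈ ν.support,
          Real.sqrt (∫ t, (uniDelta x (i m) (hermiteFun (ν m)) t) ^ 2 ∂(gaussianReal 0 1)) := by
        refine (l2norm_sum_le _ fun i _ => hμ'.memLp_prod (fun m => measurable_uniDelta ..)
          (fun m => integrable_uniDelta_sq_gaussianReal ..) _).trans_eq ?_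
        exact sum_congr rfl fun i _ => hμ'.l2norm_prod (fun m => measurable_uniDelta ..) _
    _ ≤ #(Iic ν \ Λ) • C :=
        sum_le_card_nsmul _ _ _ fun i _ => prod_le_prod (fun _ _ => Real.sqrt_nonneg _)
          fun m _ => hbound (i m) (ν m)
    _ ≤ #(Iic ν) * C := by
        rw [nsmul_eq_mul]
        gcongr
        exact sdiff_subset
    _ ≤ ∏ m ∈ ν.support, (1 + K * (ν m : ℝ)) ^ (θ + 1) := card_Iic_mul_prod_rpow_le hK θ ν

/-- If the univariate detail operators satisfy `‖Δ_i H_ν‖_{L²} ≤ (1 + Kν)^θ`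
for all `i, ν ∈ ℕ₀`, then the worst-case sparse collocation error on the
tensorized Hermite polynomial `H_ν` satisfies
`c_ν = sup_Λ ‖(I − U_Λ)H_ν‖_{L²_μ} ≤ ∏_m (1 + K ν_m)^{θ+1}`. -/
theorem c_nu_le_prod_bound (x : ℕ → ℕ → ℝ)
    (hx : ∀ k : ℕ, Set.InjOn (x k) (Set.Iic k))
    (μ : Measure (ℕ → ℝ)) [IsProbabilityMeasure μ]
    (hμ : ∀ n : ℕ, μ.map (fun ξ (j : Fin n) => ξ (j : ℕ)) =
      Measure.pi fun _ : Fin n => gaussianReal 0 1)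
    (K θ : ℝ) (hK : 1 ≤ K) (hθ : 0 ≤ θ)
    (hbound : ∀ i n : ℕ,
      Real.sqrt (∫ t, (uniDelta x i (hermiteFun n) t) ^ 2 ∂(gaussianReal 0 1)) ≤
        (1 + K * (n : ℝ)) ^ θ)
    (ν : ℕ →₀ ℕ) :
    sSup {e : ℝ | ∃ Λ : Finset (ℕ →₀ ℕ),
        e = l2norm μ (fun ξ =>
          hermiteProd ν ξ - ∑ i ∈ Λ, tensorDeltaF x i (hermiteProd ν) ξ)} ≤
      ∏ m ∈ ν.support, (1 + K * (ν m : ℝ)) ^ (θ + 1) :=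
  c_nu_le_prod_bound_general x hx μ hμ K θ hK hbound ν
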